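/- The metric space (E, d) of states is a locally compact separable metric space. -/

import Mathlib

open Set MeasureTheory

namespace CWR

/-- A "lineage": a function from ℝ (representing [0,1)) to subsets of {1,…,N}. -/
abbrev Lin (N : ℕ) := ℝ → Finset (Fin N)

/-- Right local constancy (right continuity for piecewise-constant functions) at `s`. -/
def RightConstAt (N : ℕ) (f : Lin N) (s : ℝ) : Prop :=
  ∃ ε > 0, ∀ u ∈ Set.Ico s (s + ε), f u = f s

/-- Local constancy (continuity for piecewise-constant functions) at `s`. -/
def ContAt (N : ℕ) (f : Lin N) (s : ℝ) : Prop :=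
  ∃ ε > 0, ∀ u ∈ Set.Ioo (s - ε) (s + ε), f u = f s

/-- Membership in `S_{[0,1)}(𝒫)`: right-continuous, piecewise constant with at most
finitely many discontinuity points, normalized to `∅` off `[0,1)`. -/
def MemS (N : ℕ) (f : Lin N) : Prop :=
  (∀ s ∈ Set.Ico (0:ℝ) 1, RightConstAt N f s) ∧
  {s ∈ Set.Ioo (0:ℝ) 1 | ¬ ContAt N f s}.Finite ∧
  (∀ s, s ∉ Set.Ico (0:ℝ) 1 → f s = ∅)

/-- The discrete metric `d_p` on `𝒫`. -/
noncomputable def dp (N : ℕ) (A B : Finset (Fin N)) : ℝ := if A = B then 0 else 1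

/-- The metric `d_L(f,h) = ∫₀¹ d_p(f(s),h(s)) ds`. -/
noncomputable def dL (N : ℕ) (f h : Lin N) : ℝ :=
  ∫ s in Set.Ioo (0:ℝ) 1, dp N (f s) (h s)

/-- A state: a finite set of lineages whose nonempty values partition `{1,…,N}`
at each point of `[0,1)`, none identically empty. -/
def IsState (N : ℕ) (x : Set (Lin N)) : Prop :=
  x.Finite ∧ (∀ f ∈ x, MemS N f) ∧
  (∀ f ∈ x, ∃ s ∈ Set.Ico (0:ℝ) 1, f s ≠ ∅) ∧
  (∀ s ∈ Set.Ico (0:ℝ) 1,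
    (∀ n : Fin N, ∃ f ∈ x, n ∈ f s) ∧
    (∀ f ∈ x, ∀ g ∈ x, f ≠ g → Disjoint (f s) (g s)))

/-- The set of breakpoints of a state. -/
def Bp (N : ℕ) (x : Set (Lin N)) : Set ℝ :=
  {s ∈ Set.Ioo (0:ℝ) 1 | ∃ f ∈ x, ¬ ContAt N f s}

/-- The number of breakpoints of a state. -/
noncomputable def nBp (N : ℕ) (x : Set (Lin N)) : ℕ := (Bp N x).ncard

/-- Distance from a lineage to a set of lineages. -/
noncomputable def dLset (N : ℕ) (f : Lin N) (y : Set (Lin N)) : ℝ :=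
  sInf (dL N f '' y)

/-- The metric `d` on the state space `E`. -/
noncomputable def dE (N : ℕ) (x y : Set (Lin N)) : ℝ :=
  max (sSup ((fun f => dLset N f y) '' x)) (sSup ((fun h => dLset N h x) '' y))
  + |(x.ncard : ℝ) - (y.ncard : ℝ)| + |(nBp N x : ℝ) - (nBp N y : ℝ)|

/-- The minimal gap `d₀(x)` between consecutive points of `{0} ∪ Bp(x) ∪ {1}`
(equivalently, the minimum of `b - a` over pairs `a < b` of such points). -/
noncomputable def d0 (N : ℕ) (x : Set (Lin N)) : ℝ :=
  sInf {t : ℝ | ∃ a ∈ insert (0:ℝ) (insert 1 (Bp N x)),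
    ∃ b ∈ insert (0:ℝ) (insert 1 (Bp N x)), a < b ∧ t = b - a}

/-- Pointwise union of two lineages: `(f ∨ h)(s) = f(s) ∪ h(s)`. -/
def join (N : ℕ) (f h : Lin N) : Lin N := fun s => f s ∪ h s

/-- Left truncation `f^{(u−)}`. -/
noncomputable def truncL (N : ℕ) (f : Lin N) (u : ℝ) : Lin N := fun s => if s < u then f s else ∅

/-- Right truncation `f^{(u+)}`. -/
noncomputable def truncR (N : ℕ) (f : Lin N) (u : ℝ) : Lin N := fun s => if s < u then ∅ else f s

/-- Coalescence of lineages `f` and `g` in state `x`. -/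
def coal (N : ℕ) (x : Set (Lin N)) (f g : Lin N) : Set (Lin N) :=
  insert (join N f g) (x \ {f, g})

/-- Recombination of lineage `f` of state `x` at breakpoint `u`. -/
def recomb (N : ℕ) (x : Set (Lin N)) (f : Lin N) (u : ℝ) : Set (Lin N) :=
  insert (truncL N f u) (insert (truncR N f u) (x \ {f}))

/-- Left endpoint of the support of a lineage. -/
noncomputable def startOf (N : ℕ) (f : Lin N) : ℝ :=
  sInf {s | s ∈ Set.Ico (0:ℝ) 1 ∧ f s ≠ ∅}

/-- The ranking order on lineages: smaller left endpoint of support,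
ties broken by the minimal element carried at that endpoint. -/
def rankLT (N : ℕ) (f g : Lin N) : Prop :=
  startOf N f < startOf N g ∨
  (startOf N f = startOf N g ∧ (f (startOf N f)).min < (g (startOf N g)).min)

def rankLE (N : ℕ) (f g : Lin N) : Prop := f = g ∨ rankLT N f g

/-- `f` is the first lineage of `x` in the ranking order. -/
def isFirst (N : ℕ) (x : Set (Lin N)) (f : Lin N) : Prop := ∀ g ∈ x, rankLE N f g

open Classical

/-- `b_i(x)`: for the first lineage, `inf{v : f(v) ≠ {1,…,N}}`; otherwise the
left endpoint of the support. -/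
noncomputable def bOf (N : ℕ) (x : Set (Lin N)) (f : Lin N) : ℝ :=
  if isFirst N x f then sInf {v | v ∈ Set.Ico (0:ℝ) 1 ∧ f v ≠ Finset.univ}
  else startOf N f

/-- `e_i(x)`: the right endpoint of the ancestral material of `f`, capped at 1. -/
noncomputable def eOf (N : ℕ) (f : Lin N) : ℝ :=
  min (sInf {u : ℝ | ∀ s, u < s → s < 1 → f s = ∅}) 1

open Classical

/-- The q-pair kernel `q(x,A)` of the coalescent-with-recombination process. -/
noncomputable def qker (N : ℕ) (ρ : ℝ) (p : ℝ → ℝ) (x : Set (Lin N))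
    (A : Set (Set (Lin N))) : ℝ :=
  if hx : x.Finite ∧ 2 ≤ x.ncard then
    (1/2) * ∑ f ∈ hx.1.toFinset, ∑ g ∈ hx.1.toFinset,
      (if f ≠ g ∧ coal N x f g ∈ A then (1:ℝ) else 0)
    + (ρ/2) * ∑ f ∈ hx.1.toFinset,
        ∫ s in Set.Ioo (bOf N x f) (eOf N f),
          (if recomb N x f s ∈ A then p s else 0)
  else 0

/-- The lineage carrying `{1,…,N}` on all of `[0,1)`. -/
noncomputable def fullLin (N : ℕ) : Lin N := fun s => if s ∈ Set.Ico (0:ℝ) 1 then Finset.univ else ∅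

/-- The absorbing state `Δ`. -/
def Δstate (N : ℕ) : Set (Lin N) := {fullLin N}

/-- The initial state `ϖ` of `N` singleton lineages. -/
def varpi (N : ℕ) : Set (Lin N) :=
  {f | ∃ j : Fin N, f = fun s => if s ∈ Set.Ico (0:ℝ) 1 then {j} else ∅}

/-- One-step reachability: `y ∈ E_x`, i.e. `y` arises from `x` by one coalescence
or one admissible recombination. -/
def EStep (N : ℕ) (x y : Set (Lin N)) : Prop :=
  (∃ f ∈ x, ∃ g ∈ x, f ≠ g ∧ y = coal N x f g) ∨
  (∃ f ∈ x, ∃ u, bOf N x f < u ∧ u < eOf N f ∧ y = recomb N x f u)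

/-- `y` arises from `x` by a recombination with breakpoint `u`. -/
def RecombStep (N : ℕ) (x y : Set (Lin N)) (u : ℝ) : Prop :=
  ∃ f ∈ x, bOf N x f < u ∧ u < eOf N f ∧ y = recomb N x f u

/-- Membership in the ARG space `G`: right-continuous piecewise-constant `E`-valued
paths with finitely many jumps, starting at `ϖ`, each jump a coalescence or
recombination of the previous state, and no recombination breakpoint repeated. -/
def InG (N : ℕ) (g : ℝ → Set (Lin N)) : Prop :=
  ∃ (n : ℕ) (τ : ℕ → ℝ) (st : ℕ → Set (Lin N)),
    τ 0 = 0 ∧ (∀ i < n, τ i < τ (i+1)) ∧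
    st 0 = varpi N ∧
    (∀ i < n, EStep N (st i) (st (i+1))) ∧
    (∀ i < n, ∀ t, τ i ≤ t → t < τ (i+1) → g t = st i) ∧
    (∀ t, τ n ≤ t → g t = st n) ∧
    (∀ i < n, ∀ j < n, i ≠ j → ∀ u v, RecombStep N (st i) (st (i+1)) u →
      RecombStep N (st j) (st (j+1)) v → u ≠ v)

/-- All breakpoints appearing along a path. -/
def BpG (N : ℕ) (g : ℝ → Set (Lin N)) : Set ℝ := {s | ∃ t, 0 ≤ t ∧ s ∈ Bp N (g t)}

/-- A tuple of lineages ranked in the canonical order. -/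
def Ranked (N : ℕ) (k : ℕ) (f : ℕ → Lin N) : Prop :=
  ∀ i j, i < j → j < k → rankLT N (f i) (f j)

end CWR

namespace CWR

/-! ### Auxiliary development -/

section Aux

variable {N : ℕ}

/-- Discontinuity set of a lineage. -/
def Dset (N : ℕ) (f : Lin N) : Set ℝ := {s ∈ Set.Ioo (0:ℝ) 1 | ¬ ContAt N f s}

lemma constOn (f : Lin N) {a b : ℝ} (h0 : 0 ≤ a) (hb1 : b ≤ 1)
    (hrc : ∀ s ∈ Set.Ico (0:ℝ) 1, RightConstAt N f s)
    (hct : ∀ s ∈ Set.Ioo a b, ContAt N f s) :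
    ∀ s ∈ Set.Ico a b, f s = f a := by
  rcases le_or_gt b a with hba | hab
  · intro s hs; exact absurd (lt_of_le_of_lt hba (lt_of_le_of_lt hs.1 hs.2)) (lt_irrefl _)
  set S := {t : ℝ | t ∈ Set.Ioc a b ∧ ∀ r ∈ Set.Ico a t, f r = f a} with hS
  obtain ⟨ε, hε, hεc⟩ := hrc a ⟨h0, lt_of_lt_of_le hab hb1⟩
  have ht0 : min b (a + ε) ∈ S := by
    constructor
    · exact ⟨lt_min hab (by linarith), min_le_left _ _⟩
    · intro r hr
      exact hεc r ⟨hr.1, lt_of_lt_of_le hr.2 (min_le_right _ _)⟩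
  have hSne : S.Nonempty := ⟨_, ht0⟩
  have hSbdd : BddAbove S := ⟨b, fun t ht => ht.1.2⟩
  set T := sSup S with hT
  have hTb : T ≤ b := csSup_le hSne (fun t ht => ht.1.2)
  have haT : a < T := lt_of_lt_of_le (lt_min hab (by linarith)) (le_csSup hSbdd ht0)
  have key : ∀ r ∈ Set.Ico a T, f r = f a := by
    intro r hr
    obtain ⟨t, htS, hrt⟩ := exists_lt_of_lt_csSup hSne hr.2
    exact htS.2 r ⟨hr.1, hrt⟩
  have hTeq : T = b := by
    by_contra hne
    have hTlt : T < b := lt_of_le_of_ne hTb hne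
    obtain ⟨ε', hε', hcc⟩ := hct T ⟨haT, hTlt⟩
    have hfa : f T = f a := by
      have hr : max a (T - ε'/2) ∈ Set.Ico a T :=
        ⟨le_max_left _ _, max_lt haT (by linarith)⟩
      have h1 : f (max a (T - ε'/2)) = f a := key _ hr
      have h2 : f (max a (T - ε'/2)) = f T := by
        apply hcc
        constructor
        · rcases le_total a (T - ε'/2) with h | h
          · rw [max_eq_right h]; linarith
          · rw [max_eq_left h]; linarith
        · exact lt_of_lt_of_le hr.2 (by linarith)
      rw [← h1, h2]
    have ht1 : min b (T + ε'/2) ∈ S := by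
      constructor
      · exact ⟨lt_min (lt_trans haT hTlt) (by linarith), min_le_left _ _⟩
      · intro r hr
        rcases lt_or_ge r T with h | h
        · exact key r ⟨hr.1, h⟩
        · have : f r = f T := hcc r ⟨by linarith,
            lt_trans hr.2 (lt_of_le_of_lt (min_le_right b (T + ε'/2)) (by linarith))⟩
          rw [this, hfa]
    have := le_csSup hSbdd ht1
    have : T < min b (T + ε'/2) := lt_min hTlt (by linarith)
    linarith [le_csSup hSbdd ht1]
  intro s hs
  exact key s ⟨hs.1, by rw [hTeq]; exact hs.2⟩

lemma memS_of_state {x : Set (Lin N)} (hx : IsState N x) {f : Lin N} (hf : f ∈ x) :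
    MemS N f := hx.2.1 f hf

lemma Dset_finite {f : Lin N} (hf : MemS N f) : (Dset N f).Finite := hf.2.1

lemma Dset_subset_Bp {x : Set (Lin N)} {f : Lin N} (hf : f ∈ x) :
    Dset N f ⊆ Bp N x := fun s hs => ⟨hs.1, f, hf, hs.2⟩

lemma Bp_finite {x : Set (Lin N)} (hx : IsState N x) : (Bp N x).Finite := by
  have : Bp N x ⊆ ⋃ f ∈ x, Dset N f := by
    rintro s ⟨hs, f, hf, hcf⟩
    exact Set.mem_biUnion hf ⟨hs, hcf⟩
  exact Set.Finite.subset (Set.Finite.biUnion hx.1 (fun f hf => Dset_finite (hx.2.1 f hf))) this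

lemma Bp_subset_Ioo {x : Set (Lin N)} : Bp N x ⊆ Set.Ioo (0:ℝ) 1 := fun s hs => hs.1

/-- The set where two lineages agree, intersected with the relevant open window,
is measurable. -/
lemma contAt_of_notin {f : Lin N} {s : ℝ} (hs : s ∈ Set.Ioo (0:ℝ) 1) (h : s ∉ Dset N f) :
    ContAt N f s := by
  by_contra hc; exact h ⟨hs, hc⟩

lemma measurableSet_eq_set {f g : Lin N} (hf : MemS N f) (hg : MemS N g) :
    MeasurableSet {s : ℝ | f s = g s} := by
  classical
  set W := Set.Ioo (0:ℝ) 1 \ (Dset N f ∪ Dset N g) with hW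
  have hWopen : IsOpen W :=
    IsOpen.sdiff isOpen_Ioo (Set.Finite.isClosed ((Dset_finite hf).union (Dset_finite hg)))
  have hUopen : IsOpen {s ∈ W | f s = g s} := by
    rw [Metric.isOpen_iff]
    rintro s ⟨hsW, hfg⟩
    obtain ⟨ε₁, hε₁, h₁⟩ := contAt_of_notin hsW.1 (fun h => hsW.2 (Or.inl h))
    obtain ⟨ε₂, hε₂, h₂⟩ := contAt_of_notin hsW.1 (fun h => hsW.2 (Or.inr h))
    obtain ⟨ε₃, hε₃, h₃⟩ := Metric.isOpen_iff.1 hWopen s hsW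
    refine ⟨min ε₃ (min ε₁ ε₂), by positivity, ?_⟩
    intro r hr
    have hd : dist r s < min ε₃ (min ε₁ ε₂) := hr
    have hd3 : dist r s < ε₃ := lt_of_lt_of_le hd (min_le_left _ _)
    have hd1 : |r - s| < ε₁ := by
      rw [← Real.dist_eq]; exact lt_of_lt_of_le hd (le_trans (min_le_right _ _) (min_le_left _ _))
    have hd2 : |r - s| < ε₂ := by
      rw [← Real.dist_eq]; exact lt_of_lt_of_le hd (le_trans (min_le_right _ _) (min_le_right _ _))
    rw [abs_sub_lt_iff] at hd1 hd2
    refine ⟨h₃ (Metric.mem_ball.2 hd3), ?_⟩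
    have e1 : f r = f s := h₁ r ⟨by linarith [hd1.1, hd1.2], by linarith [hd1.1, hd1.2]⟩
    have e2 : g r = g s := h₂ r ⟨by linarith [hd2.1, hd2.2], by linarith [hd2.1, hd2.2]⟩
    show f r = g r
    rw [e1, e2, hfg]
  have hset : {s : ℝ | f s = g s} =
      {s ∈ W | f s = g s} ∪ ({s ∈ ({0} : Set ℝ) ∪ (Dset N f ∪ Dset N g) | f s = g s})
        ∪ (Set.Ico (0:ℝ) 1)ᶜ := by
    ext s
    constructor
    · intro hfg
      by_cases hIco : s ∈ Set.Ico (0:ℝ) 1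
      · rcases eq_or_lt_of_le hIco.1 with h0 | h0
        · exact Or.inl (Or.inr ⟨Or.inl h0.symm, hfg⟩)
        · by_cases hD : s ∈ Dset N f ∪ Dset N g
          · exact Or.inl (Or.inr ⟨Or.inr hD, hfg⟩)
          · exact Or.inl (Or.inl ⟨⟨⟨h0, hIco.2⟩, hD⟩, hfg⟩)
      · exact Or.inr hIco
    · rintro ((h | h) | h)
      · exact h.2
      · exact h.2
      · show f s = g s
        rw [hf.2.2 s h, hg.2.2 s h]
  rw [hset]
  refine MeasurableSet.union (MeasurableSet.union hUopen.measurableSet ?_) measurableSet_Ico.compl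
  refine Set.Finite.measurableSet (Set.Finite.subset ?_ (Set.sep_subset _ _))
  exact (Set.finite_singleton 0).union ((Dset_finite hf).union (Dset_finite hg))

lemma measurableSet_ne_set {f g : Lin N} (hf : MemS N f) (hg : MemS N g) :
    MeasurableSet {s : ℝ | f s ≠ g s} :=
  (measurableSet_eq_set hf hg).compl

/-- The fundamental formula: `dL` is the Lebesgue measure of the disagreement set. -/
lemma dL_eq_volume {f g : Lin N} (hf : MemS N f) (hg : MemS N g) :
    dL N f g = (volume ({s : ℝ | f s ≠ g s} ∩ Set.Ioo (0:ℝ) 1)).toReal := by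
  classical
  have hind : (fun s => dp N (f s) (g s)) =
      Set.indicator {s : ℝ | f s ≠ g s} (fun _ => (1:ℝ)) := by
    funext s
    by_cases h : f s = g s
    · rw [Set.indicator_of_notMem (by simpa using h)]
      simp [dp, h]
    · rw [Set.indicator_of_mem (by simpa using h)]
      simp [dp, h]
  unfold dL
  rw [hind, MeasureTheory.setIntegral_indicator (measurableSet_ne_set hf hg),
    MeasureTheory.setIntegral_const]
  rw [Set.inter_comm]
  simp
  rfl

lemma volume_ne_lt_top (f g : Lin N) :
    volume ({s : ℝ | f s ≠ g s} ∩ Set.Ioo (0:ℝ) 1) < ⊤ := by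
  refine lt_of_le_of_lt (measure_mono Set.inter_subset_right) ?_
  simp [Real.volume_Ioo]

lemma dL_nonneg (f g : Lin N) : 0 ≤ dL N f g := by
  apply integral_nonneg
  intro s
  simp only [Pi.zero_apply, dp]
  split <;> norm_num

lemma dL_comm (f g : Lin N) : dL N f g = dL N g f := by
  unfold dL dp
  congr 1; funext s
  by_cases h : f s = g s <;> simp [h, Ne.symm, eq_comm]

lemma dL_self (f : Lin N) : dL N f f = 0 := by
  unfold dL dp
  simp

lemma dL_triangle {f g h : Lin N} (hf : MemS N f) (hg : MemS N g) (hh : MemS N h) :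
    dL N f h ≤ dL N f g + dL N g h := by
  rw [dL_eq_volume hf hh, dL_eq_volume hf hg, dL_eq_volume hg hh]
  have hsub : {s : ℝ | f s ≠ h s} ∩ Set.Ioo (0:ℝ) 1 ⊆
      ({s : ℝ | f s ≠ g s} ∩ Set.Ioo (0:ℝ) 1) ∪ ({s : ℝ | g s ≠ h s} ∩ Set.Ioo (0:ℝ) 1) := by
    rintro s ⟨hs, hIoo⟩
    by_cases h1 : f s = g s
    · exact Or.inr ⟨fun h2 => hs (h1.trans h2), hIoo⟩
    · exact Or.inl ⟨h1, hIoo⟩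
  calc (volume ({s : ℝ | f s ≠ h s} ∩ Set.Ioo (0:ℝ) 1)).toReal
      ≤ (volume (({s : ℝ | f s ≠ g s} ∩ Set.Ioo (0:ℝ) 1) ∪
          ({s : ℝ | g s ≠ h s} ∩ Set.Ioo (0:ℝ) 1))).toReal := by
        apply ENNReal.toReal_mono
        · exact ne_of_lt (lt_of_le_of_lt (measure_union_le _ _)
            (ENNReal.add_lt_top.2 ⟨volume_ne_lt_top f g, volume_ne_lt_top g h⟩))
        · exact measure_mono hsub
    _ ≤ _ := by
        rw [← ENNReal.toReal_add (ne_of_lt (volume_ne_lt_top f g))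
          (ne_of_lt (volume_ne_lt_top g h))]
        exact ENNReal.toReal_mono
          (ENNReal.add_ne_top.2 ⟨ne_of_lt (volume_ne_lt_top f g), ne_of_lt (volume_ne_lt_top g h)⟩)
          (measure_union_le _ _)

/-- Interval lower bound for `dL`. -/
lemma le_dL_of_Ioo {f g : Lin N} (hf : MemS N f) (hg : MemS N g) {a b : ℝ}
    (hsub : Set.Ioo a b ⊆ {s : ℝ | f s ≠ g s} ∩ Set.Ioo (0:ℝ) 1) :
    b - a ≤ dL N f g := by
  rw [dL_eq_volume hf hg]
  rcases le_or_gt b a with hba | hab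
  · have : 0 ≤ (volume ({s : ℝ | f s ≠ g s} ∩ Set.Ioo (0:ℝ) 1)).toReal := ENNReal.toReal_nonneg
    linarith
  · have h1 : volume (Set.Ioo a b) ≤ volume ({s : ℝ | f s ≠ g s} ∩ Set.Ioo (0:ℝ) 1) :=
      measure_mono hsub
    have h2 := ENNReal.toReal_mono (ne_of_lt (volume_ne_lt_top f g)) h1
    rwa [Real.volume_Ioo, ENNReal.toReal_ofReal (by linarith)] at h2

lemma dL_eq_zero_imp {f g : Lin N} (hf : MemS N f) (hg : MemS N g)
    (h : dL N f g = 0) : f = g := by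
  funext s₀
  by_contra hne
  have hIco : s₀ ∈ Set.Ico (0:ℝ) 1 := by
    by_contra hI
    exact hne (by rw [hf.2.2 s₀ hI, hg.2.2 s₀ hI])
  obtain ⟨ε₁, hε₁, h₁⟩ := hf.1 s₀ hIco
  obtain ⟨ε₂, hε₂, h₂⟩ := hg.1 s₀ hIco
  set ε := min ε₁ (min ε₂ (1 - s₀)) with hε
  have hεpos : 0 < ε := lt_min hε₁ (lt_min hε₂ (by linarith [hIco.2]))
  have hsub : Set.Ioo s₀ (s₀ + ε) ⊆ {s : ℝ | f s ≠ g s} ∩ Set.Ioo (0:ℝ) 1 := by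
    intro r hr
    have hr1 : r ∈ Set.Ico s₀ (s₀ + ε₁) :=
      ⟨le_of_lt hr.1, lt_of_lt_of_le hr.2 (by linarith [min_le_left ε₁ (min ε₂ (1 - s₀))])⟩
    have hr2 : r ∈ Set.Ico s₀ (s₀ + ε₂) := by
      refine ⟨le_of_lt hr.1, lt_of_lt_of_le hr.2 ?_⟩
      have := le_trans (min_le_right ε₁ (min ε₂ (1 - s₀))) (min_le_left ε₂ (1 - s₀))
      linarith
    refine ⟨?_, lt_of_le_of_lt hIco.1 hr.1, ?_⟩
    · show f r ≠ g r
      rw [h₁ r hr1, h₂ r hr2]; exact hne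
    · have := le_trans (min_le_right ε₁ (min ε₂ (1 - s₀))) (min_le_right ε₂ (1 - s₀))
      linarith [hr.2]
  have := le_dL_of_Ioo hf hg hsub
  rw [h] at this
  linarith


/-! ### Parametrization of states by breakpoints and patterns -/

/-- Strictly increasing breakpoint vectors inside `(0,1)`. -/
def Valid (m : ℕ) (v : Fin m → ℝ) : Prop :=
  (∀ i, 0 < v i) ∧ (∀ i, v i < 1) ∧ (∀ i j : Fin m, (i:ℕ) < (j:ℕ) → v i < v j)

/-- Grid points `0, v₀, …, v_{m-1}, 1, 1, …`. -/
noncomputable def tpt (m : ℕ) (v : Fin m → ℝ) (i : ℕ) : ℝ :=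
  if h1 : i = 0 then 0 else if h2 : i ≤ m then v ⟨i - 1, by omega⟩ else 1

lemma tpt_zero {m : ℕ} (v : Fin m → ℝ) : tpt m v 0 = 0 := by simp [tpt]

lemma tpt_succ {m : ℕ} (v : Fin m → ℝ) (j : Fin m) : tpt m v ((j:ℕ) + 1) = v j := by
  have h2 : (j:ℕ) + 1 ≤ m := j.isLt
  simp only [tpt, dif_neg (Nat.succ_ne_zero _), dif_pos h2]
  congr 1

lemma tpt_of_gt {m : ℕ} (v : Fin m → ℝ) {i : ℕ} (h : m < i) : tpt m v i = 1 := by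
  simp only [tpt]
  rw [dif_neg (by omega), dif_neg (by omega)]

lemma tpt_nonneg {m : ℕ} {v : Fin m → ℝ} (hv : Valid m v) (i : ℕ) : 0 ≤ tpt m v i := by
  simp only [tpt]
  split
  · exact le_refl 0
  split
  · exact le_of_lt (hv.1 _)
  · exact zero_le_one

lemma tpt_le_one {m : ℕ} {v : Fin m → ℝ} (hv : Valid m v) (i : ℕ) : tpt m v i ≤ 1 := by
  simp only [tpt]
  split
  · exact zero_le_one
  split
  · exact le_of_lt (hv.2.1 _)
  · exact le_refl 1

lemma tpt_lt {m : ℕ} {v : Fin m → ℝ} (hv : Valid m v) {i j : ℕ} (h : i < j) (hi : i ≤ m) :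
    tpt m v i < tpt m v j := by
  rcases Nat.eq_zero_or_pos i with rfl | h0
  · rw [tpt_zero]
    rcases le_or_gt j m with hjm | hjm
    · simp only [tpt, dif_neg (by omega : ¬ j = 0), dif_pos hjm]
      exact hv.1 _
    · rw [tpt_of_gt v hjm]; exact zero_lt_one
  · rcases le_or_gt j m with hjm | hjm
    · simp only [tpt, dif_neg (by omega : ¬ i = 0), dif_neg (by omega : ¬ j = 0),
        dif_pos hi, dif_pos hjm]
      exact hv.2.2 _ _ (by show i - 1 < j - 1; omega)
    · rw [tpt_of_gt v hjm]
      simp only [tpt, dif_neg (by omega : ¬ i = 0), dif_pos hi]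
      exact hv.2.1 _

lemma tpt_mono {m : ℕ} {v : Fin m → ℝ} (hv : Valid m v) {i j : ℕ} (h : i ≤ j) :
    tpt m v i ≤ tpt m v j := by
  rcases eq_or_lt_of_le h with rfl | hl
  · exact le_refl _
  rcases le_or_gt i m with him | him
  · exact le_of_lt (tpt_lt hv hl him)
  · rw [tpt_of_gt v him, tpt_of_gt v (lt_of_le_of_lt (le_of_lt him) hl)]

lemma tpt_lt_reflect {m : ℕ} {v : Fin m → ℝ} (hv : Valid m v) {i j : ℕ}
    (h : tpt m v i < tpt m v j) : i < j := by
  by_contra hc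
  exact absurd (tpt_mono hv (not_lt.1 hc)) (not_le.2 h)

/-- Index of the interval of the grid containing `s`. -/
noncomputable def cnt (m : ℕ) (v : Fin m → ℝ) (s : ℝ) : ℕ :=
  sInf {i : ℕ | s < tpt m v (i + 1)}

lemma cnt_le {m : ℕ} {v : Fin m → ℝ} {s : ℝ} (hs : s < 1) : cnt m v s ≤ m := by
  apply Nat.sInf_le
  show s < tpt m v (m + 1)
  rw [tpt_of_gt v (Nat.lt_succ_self m)]
  exact hs

lemma lt_tpt_cnt {m : ℕ} {v : Fin m → ℝ} {s : ℝ} (hs : s < 1) :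
    s < tpt m v (cnt m v s + 1) := by
  have h : cnt m v s ∈ {i : ℕ | s < tpt m v (i + 1)} :=
    Nat.sInf_mem ⟨m, show s < tpt m v (m + 1) by
      rw [tpt_of_gt v (Nat.lt_succ_self m)]; exact hs⟩
  exact h

lemma tpt_cnt_le {m : ℕ} {v : Fin m → ℝ} {s : ℝ} (hs0 : 0 ≤ s) :
    tpt m v (cnt m v s) ≤ s := by
  cases h : cnt m v s with
  | zero => rw [tpt_zero]; exact hs0
  | succ k =>
    have hk : k ∉ {i : ℕ | s < tpt m v (i + 1)} :=
      Nat.notMem_of_lt_sInf (by change k < cnt m v s; omega)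
    exact not_lt.1 hk

lemma cnt_eq {m : ℕ} {v : Fin m → ℝ} (hv : Valid m v) {i : ℕ} {s : ℝ} (hi : i ≤ m)
    (h1 : tpt m v i ≤ s) (h2 : s < tpt m v (i + 1)) : cnt m v s = i := by
  refine le_antisymm (Nat.sInf_le h2) ?_
  by_contra hc
  have hlt : cnt m v s < i := not_le.1 hc
  have hmem : cnt m v s ∈ {j : ℕ | s < tpt m v (j + 1)} := Nat.sInf_mem ⟨i, h2⟩
  have : tpt m v (cnt m v s + 1) ≤ tpt m v i := tpt_mono hv (by omega)
  exact absurd (lt_of_lt_of_le hmem this) (not_lt.2 h1)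

/-- The step lineage with pattern `p` over grid `v`. -/
noncomputable def lin (N m : ℕ) (p : ℕ → Finset (Fin N)) (v : Fin m → ℝ) : Lin N :=
  fun s => if s ∈ Set.Ico (0:ℝ) 1 then p (cnt m v s) else ∅

lemma lin_off {N m : ℕ} (p : ℕ → Finset (Fin N)) (v : Fin m → ℝ) {s : ℝ}
    (h : s ∉ Set.Ico (0:ℝ) 1) : lin N m p v s = ∅ := by simp [lin, h]

lemma lin_on {N m : ℕ} (p : ℕ → Finset (Fin N)) (v : Fin m → ℝ) {s : ℝ}
    (h : s ∈ Set.Ico (0:ℝ) 1) : lin N m p v s = p (cnt m v s) := by simp [lin, h]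

lemma lin_eq_on {N m : ℕ} (p : ℕ → Finset (Fin N)) {v : Fin m → ℝ} (hv : Valid m v)
    {i : ℕ} {s : ℝ} (hi : i ≤ m) (h1 : tpt m v i ≤ s) (h2 : s < tpt m v (i + 1)) :
    lin N m p v s = p i := by
  have hs : s ∈ Set.Ico (0:ℝ) 1 :=
    ⟨le_trans (tpt_nonneg hv i) h1, lt_of_lt_of_le h2 (tpt_le_one hv _)⟩
  rw [lin_on p v hs, cnt_eq hv hi h1 h2]

lemma lin_at_tpt {N m : ℕ} (p : ℕ → Finset (Fin N)) {v : Fin m → ℝ} (hv : Valid m v)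
    {i : ℕ} (hi : i ≤ m) : lin N m p v (tpt m v i) = p i :=
  lin_eq_on p hv hi (le_refl _) (tpt_lt hv (Nat.lt_succ_self i) hi)

lemma lin_congr {N m : ℕ} {p q : ℕ → Finset (Fin N)} (v : Fin m → ℝ)
    (h : ∀ i ≤ m, p i = q i) : lin N m p v = lin N m q v := by
  funext s
  by_cases hs : s ∈ Set.Ico (0:ℝ) 1
  · rw [lin_on p v hs, lin_on q v hs, h _ (cnt_le hs.2)]
  · rw [lin_off p v hs, lin_off q v hs]

lemma Dset_lin {N m : ℕ} (p : ℕ → Finset (Fin N)) {v : Fin m → ℝ} (hv : Valid m v) :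
    Dset N (lin N m p v) ⊆ Set.range v := by
    intro s hs
    by_contra hns
    apply hs.2
    have h0s : (0:ℝ) ≤ s := le_of_lt hs.1.1
    have hcle := cnt_le (v := v) hs.1.2
    have h1 : tpt m v (cnt m v s) ≤ s := tpt_cnt_le h0s
    have h2 : s < tpt m v (cnt m v s + 1) := lt_tpt_cnt hs.1.2
    have hlt : tpt m v (cnt m v s) < s := by
      rcases eq_or_lt_of_le h1 with he | h
      · exfalso
        apply hns
        cases hc : cnt m v s with
        | zero =>
          rw [hc, tpt_zero] at he
          have := hs.1.1
          rw [← he] at this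
          exact absurd this (lt_irrefl 0)
        | succ k =>
          have hk : k < m := by omega
          refine ⟨⟨k, hk⟩, ?_⟩
          rw [← tpt_succ v ⟨k, hk⟩]
          show tpt m v (k + 1) = s
          rw [← hc]; exact he
      · exact h
    refine ⟨min (s - tpt m v (cnt m v s)) (tpt m v (cnt m v s + 1) - s),
      lt_min (by linarith) (by linarith), ?_⟩
    intro r hr
    have hra : tpt m v (cnt m v s) ≤ r := by
      have := min_le_left (s - tpt m v (cnt m v s)) (tpt m v (cnt m v s + 1) - s)
      linarith [hr.1]
    have hrb : r < tpt m v (cnt m v s + 1) := by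
      have := min_le_right (s - tpt m v (cnt m v s)) (tpt m v (cnt m v s + 1) - s)
      linarith [hr.2]
    rw [lin_eq_on p hv hcle hra hrb, lin_eq_on p hv hcle h1 h2]

lemma memS_lin {N m : ℕ} (p : ℕ → Finset (Fin N)) {v : Fin m → ℝ} (hv : Valid m v) :
    MemS N (lin N m p v) := by
  refine ⟨?_, (Set.finite_range v).subset (Dset_lin p hv), fun s hs => lin_off p v hs⟩
  intro s hs
  refine ⟨tpt m v (cnt m v s + 1) - s, by linarith [lt_tpt_cnt (v := v) hs.2], ?_⟩
  intro r hr
  have hr2 : r < tpt m v (cnt m v s + 1) := by linarith [hr.2]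
  have hr01 : r ∈ Set.Ico (0:ℝ) 1 :=
    ⟨le_trans hs.1 hr.1, lt_of_lt_of_le hr2 (tpt_le_one hv _)⟩
  have hc : cnt m v r = cnt m v s :=
    cnt_eq hv (cnt_le hs.2) (le_trans (tpt_cnt_le hs.1) hr.1) hr2
  rw [lin_on p v hs, lin_on p v hr01, hc]

/-- Representation: a lineage whose discontinuities lie on the grid is a step lineage. -/
lemma rep {N m : ℕ} {f : Lin N} {v : Fin m → ℝ} (hf : MemS N f) (hv : Valid m v)
    (hD : ∀ s ∈ Dset N f, ∃ i, v i = s) :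
    f = lin N m (fun i => f (tpt m v i)) v := by
  funext s
  by_cases hs : s ∈ Set.Ico (0:ℝ) 1
  swap
  · rw [lin_off _ v hs, hf.2.2 s hs]
  rw [lin_on _ v hs]
  have h1 : tpt m v (cnt m v s) ≤ s := tpt_cnt_le hs.1
  have h2 : s < tpt m v (cnt m v s + 1) := lt_tpt_cnt hs.2
  have hct : ∀ r ∈ Set.Ioo (tpt m v (cnt m v s)) (tpt m v (cnt m v s + 1)), ContAt N f r := by
    intro r hr
    by_contra hc
    have hrI : r ∈ Set.Ioo (0:ℝ) 1 :=
      ⟨lt_of_le_of_lt (tpt_nonneg hv _) hr.1, lt_of_lt_of_le hr.2 (tpt_le_one hv _)⟩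
    obtain ⟨j, hj⟩ := hD r ⟨hrI, hc⟩
    have hj' : tpt m v ((j:ℕ) + 1) = r := by rw [tpt_succ v j]; exact hj
    have l1 : cnt m v s < (j:ℕ) + 1 := tpt_lt_reflect hv (by rw [hj']; exact hr.1)
    have l2 : (j:ℕ) + 1 < cnt m v s + 1 := tpt_lt_reflect hv (by rw [hj']; exact hr.2)
    omega
  exact constOn f (tpt_nonneg hv _) (tpt_le_one hv _) hf.1 hct s ⟨h1, h2⟩


/-! ### The metric space structure -/

lemma state_nonempty_of {x y : Set (Lin N)} (hx : IsState N x) (hy : IsState N y)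
    (hne : x.Nonempty) : y.Nonempty := by
  obtain ⟨f, hf⟩ := hne
  obtain ⟨s₀, _, hfs⟩ := hx.2.2.1 f hf
  obtain ⟨n, _⟩ := Finset.nonempty_iff_ne_empty.2 hfs
  obtain ⟨g, hg, _⟩ := (hy.2.2.2 0 ⟨le_refl 0, zero_lt_one⟩).1 n
  exact ⟨g, hg⟩

lemma dLset_le {f g : Lin N} {y : Set (Lin N)} (hy : y.Finite) (hg : g ∈ y) :
    dLset N f y ≤ dL N f g :=
  csInf_le (hy.image _).bddBelow ⟨g, hg, rfl⟩

lemma dLset_nonneg (f : Lin N) (y : Set (Lin N)) : 0 ≤ dLset N f y :=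
  Real.sInf_nonneg (by rintro r ⟨g, _, rfl⟩; exact dL_nonneg f g)

lemma dLset_attain {f : Lin N} {y : Set (Lin N)} (hy : y.Finite) (hne : y.Nonempty) :
    ∃ g ∈ y, dLset N f y = dL N f g := by
  obtain ⟨g, hg, he⟩ := (hne.image (dL N f)).csInf_mem (hy.image _)
  exact ⟨g, hg, he.symm⟩

lemma sup_dLset_nonneg (x y : Set (Lin N)) : 0 ≤ sSup ((fun f => dLset N f y) '' x) :=
  Real.sSup_nonneg (by rintro r ⟨f, _, rfl⟩; exact dLset_nonneg f y)

lemma dE_nonneg (x y : Set (Lin N)) : 0 ≤ dE N x y := by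
  unfold dE
  have h1 := sup_dLset_nonneg x y
  have h2 : (0:ℝ) ≤ |(x.ncard : ℝ) - (y.ncard : ℝ)| := abs_nonneg _
  have h3 : (0:ℝ) ≤ |(nBp N x : ℝ) - (nBp N y : ℝ)| := abs_nonneg _
  have h4 : sSup ((fun f => dLset N f y) '' x) ≤
      max (sSup ((fun f => dLset N f y) '' x)) (sSup ((fun h => dLset N h x) '' y)) :=
    le_max_left _ _
  linarith

lemma sup_dLset_self {x : Set (Lin N)} (hx : IsState N x) :
    sSup ((fun f => dLset N f x) '' x) = 0 := by
  apply le_antisymm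
  · apply Real.sSup_le
    · rintro r ⟨f, hf, rfl⟩
      have h1 : dLset N f x ≤ dL N f f := dLset_le hx.1 hf
      rw [dL_self] at h1
      exact h1
    · exact le_refl 0
  · exact sup_dLset_nonneg x x

lemma dE_self {x : Set (Lin N)} (hx : IsState N x) : dE N x x = 0 := by
  unfold dE
  rw [sup_dLset_self hx, max_self, sub_self, abs_zero]
  ring_nf
  rw [abs_zero]

lemma dE_comm (x y : Set (Lin N)) : dE N x y = dE N y x := by
  unfold dE
  rw [max_comm, abs_sub_comm ((x.ncard : ℝ)) _, abs_sub_comm ((nBp N x : ℝ)) _]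

lemma sup_le_add {x y z : Set (Lin N)} (hx : IsState N x) (hy : IsState N y)
    (hz : IsState N z) :
    sSup ((fun f => dLset N f z) '' x) ≤
      sSup ((fun f => dLset N f y) '' x) + sSup ((fun g => dLset N g z) '' y) := by
  apply Real.sSup_le
  · rintro r ⟨f, hf, rfl⟩
    have hyne : y.Nonempty := state_nonempty_of hx hy ⟨f, hf⟩
    have hzne : z.Nonempty := state_nonempty_of hx hz ⟨f, hf⟩
    obtain ⟨g, hg, hfg⟩ := dLset_attain (f := f) hy.1 hyne
    obtain ⟨h, hh, hgh⟩ := dLset_attain (f := g) hz.1 hzne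
    have t1 : dLset N f z ≤ dL N f h := dLset_le hz.1 hh
    have t2 : dL N f h ≤ dL N f g + dL N g h :=
      dL_triangle (hx.2.1 f hf) (hy.2.1 g hg) (hz.2.1 h hh)
    have t3 : dLset N f y ≤ sSup ((fun f => dLset N f y) '' x) :=
      le_csSup (hx.1.image _).bddAbove ⟨f, hf, rfl⟩
    have t4 : dLset N g z ≤ sSup ((fun g => dLset N g z) '' y) :=
      le_csSup (hy.1.image _).bddAbove ⟨g, hg, rfl⟩
    linarith [hfg ▸ t3, hgh ▸ t4]
  · exact add_nonneg (sup_dLset_nonneg x y) (sup_dLset_nonneg y z)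

lemma dE_triangle {x y z : Set (Lin N)} (hx : IsState N x) (hy : IsState N y)
    (hz : IsState N z) : dE N x z ≤ dE N x y + dE N y z := by
  unfold dE
  have hH : max (sSup ((fun f => dLset N f z) '' x)) (sSup ((fun h => dLset N h x) '' z)) ≤
      max (sSup ((fun f => dLset N f y) '' x)) (sSup ((fun h => dLset N h x) '' y)) +
      max (sSup ((fun f => dLset N f z) '' y)) (sSup ((fun h => dLset N h y) '' z)) := by
    apply max_le
    · exact le_trans (sup_le_add hx hy hz) (add_le_add (le_max_left _ _) (le_max_left _ _))
    · exact le_trans (sup_le_add hz hy hx)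
        (by rw [add_comm]; exact add_le_add (le_max_right _ _) (le_max_right _ _))
  have a1 : |(x.ncard : ℝ) - (z.ncard : ℝ)| ≤
      |(x.ncard : ℝ) - (y.ncard : ℝ)| + |(y.ncard : ℝ) - (z.ncard : ℝ)| := abs_sub_le _ _ _
  have a2 : |(nBp N x : ℝ) - (nBp N z : ℝ)| ≤
      |(nBp N x : ℝ) - (nBp N y : ℝ)| + |(nBp N y : ℝ) - (nBp N z : ℝ)| := abs_sub_le _ _ _
  linarith

lemma dE_eq_zero {x y : Set (Lin N)} (hx : IsState N x) (hy : IsState N y)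
    (h : dE N x y = 0) : x = y := by
  have key : ∀ {x' y' : Set (Lin N)}, IsState N x' → IsState N y' →
      sSup ((fun f => dLset N f y') '' x') ≤ 0 → x' ⊆ y' := by
    intro x' y' hx' hy' hA f hf
    have h1 : dLset N f y' ≤ 0 :=
      le_trans (le_csSup (hx'.1.image _).bddAbove ⟨f, hf, rfl⟩) hA
    have heq : dLset N f y' = 0 := le_antisymm h1 (dLset_nonneg _ _)
    have hyne : y'.Nonempty := state_nonempty_of hx' hy' ⟨f, hf⟩
    obtain ⟨g, hg, hfg⟩ := dLset_attain (f := f) hy'.1 hyne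
    have : dL N f g = 0 := by rw [← hfg, heq]
    have hfgeq : f = g := dL_eq_zero_imp (hx'.2.1 f hf) (hy'.2.1 g hg) this
    rwa [hfgeq]
  unfold dE at h
  have h2 : (0:ℝ) ≤ |(x.ncard : ℝ) - (y.ncard : ℝ)| := abs_nonneg _
  have h3 : (0:ℝ) ≤ |(nBp N x : ℝ) - (nBp N y : ℝ)| := abs_nonneg _
  have hA : sSup ((fun f => dLset N f y) '' x) ≤ 0 := by
    have := le_max_left (sSup ((fun f => dLset N f y) '' x)) (sSup ((fun h => dLset N h x) '' y))
    have := sup_dLset_nonneg y x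
    linarith [le_max_left (sSup ((fun f => dLset N f y) '' x))
      (sSup ((fun h => dLset N h x) '' y))]
  have hB : sSup ((fun h => dLset N h x) '' y) ≤ 0 := by
    have := sup_dLset_nonneg x y
    linarith [le_max_right (sSup ((fun f => dLset N f y) '' x))
      (sSup ((fun h => dLset N h x) '' y))]
  exact Set.Subset.antisymm (key hx hy hA) (key hy hx hB)

/-- The metric space instance on the state space. -/
noncomputable def Einst (N : ℕ) : MetricSpace {x : Set (Lin N) // IsState N x} where
  dist a b := dE N a.1 b.1
  dist_self a := dE_self a.2
  dist_comm a b := dE_comm a.1 b.1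
  dist_triangle a b c := dE_triangle a.2 b.2 c.2
  eq_of_dist_eq_zero {a b} h := Subtype.ext (dE_eq_zero a.2 b.2 h)


/-! ### States as parametrized objects -/

/-- Canonical strictly monotone enumeration of the breakpoints of a state. -/
lemma exists_enum {x : Set (Lin N)} (hx : IsState N x) :
    ∃ u : Fin (nBp N x) → ℝ, Valid (nBp N x) u ∧ Set.range u = Bp N x := by
  have hfin := Bp_finite hx
  have hcard : hfin.toFinset.card = nBp N x := (Set.ncard_eq_toFinset_card _ hfin).symm
  set e := hfin.toFinset.orderIsoOfFin hcard with he
  refine ⟨fun i => (e i : ℝ), ⟨?_, ?_, ?_⟩, ?_⟩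
  · intro i
    exact (Bp_subset_Ioo (hfin.mem_toFinset.1 (e i).2)).1
  · intro i
    exact (Bp_subset_Ioo (hfin.mem_toFinset.1 (e i).2)).2
  · intro i j hij
    exact Subtype.coe_lt_coe.2 ((OrderIso.lt_iff_lt e).2 (Fin.lt_def.2 hij))
  · ext b
    constructor
    · rintro ⟨i, rfl⟩
      exact hfin.mem_toFinset.1 (e i).2
    · intro hb
      obtain ⟨i, hi⟩ := e.surjective ⟨b, hfin.mem_toFinset.2 hb⟩
      exact ⟨i, congrArg Subtype.val hi⟩

lemma exists_enum' {x : Set (Lin N)} (hx : IsState N x) :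
    ∃ (m : ℕ) (u : Fin m → ℝ), m = nBp N x ∧ Valid m u ∧ Set.range u = Bp N x := by
  obtain ⟨u, hu, hrange⟩ := exists_enum hx
  exact ⟨nBp N x, u, rfl, hu, hrange⟩

/-- A state rebuilt over a perturbed breakpoint vector. -/
noncomputable def linstate (N : ℕ) (x : Set (Lin N)) (m : ℕ) (u v : Fin m → ℝ) :
    Set (Lin N) :=
  (fun f => lin N m (fun i => f (tpt m u i)) v) '' x

section StatePar

variable {x : Set (Lin N)} {m : ℕ} {u : Fin m → ℝ}

/-- Every lineage of a state is a step lineage over the canonical grid. -/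
lemma rep_state (hx : IsState N x) (hu : Valid m u) (hrange : Set.range u = Bp N x)
    {f : Lin N} (hf : f ∈ x) :
    f = lin N m (fun i => f (tpt m u i)) u :=
  rep (hx.2.1 f hf) hu (fun s hs => by
    have : s ∈ Set.range u := hrange ▸ Dset_subset_Bp hf hs
    exact this)

lemma patt_inj (hx : IsState N x) (hu : Valid m u) (hrange : Set.range u = Bp N x)
    {f g : Lin N} (hf : f ∈ x) (hg : g ∈ x)
    (h : ∀ i ≤ m, f (tpt m u i) = g (tpt m u i)) : f = g := by
  rw [rep_state hx hu hrange hf, rep_state hx hu hrange hg]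
  exact lin_congr u h

lemma jump_exists (hx : IsState N x) (hu : Valid m u) (hrange : Set.range u = Bp N x)
    (j : Fin m) :
    ∃ f ∈ x, f (tpt m u (j:ℕ)) ≠ f (tpt m u ((j:ℕ) + 1)) := by
  have hujBp : u j ∈ Bp N x := hrange ▸ ⟨j, rfl⟩
  obtain ⟨huj, f, hf, hnc⟩ := hujBp
  refine ⟨f, hf, ?_⟩
  intro heq
  apply hnc
  have hj1 : (j:ℕ) + 1 ≤ m := j.isLt
  have hja : tpt m u (j:ℕ) < tpt m u ((j:ℕ)+1) := tpt_lt hu (Nat.lt_succ_self _) (by omega)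
  have hjb : tpt m u ((j:ℕ)+1) < tpt m u ((j:ℕ)+2) := tpt_lt hu (Nat.lt_succ_self _) (by omega)
  have hrep := rep_state hx hu hrange hf
  have htj : tpt m u ((j:ℕ)+1) = u j := tpt_succ u j
  refine ⟨min (u j - tpt m u (j:ℕ)) (tpt m u ((j:ℕ)+2) - u j),
    lt_min (by rw [← htj]; linarith) (by rw [← htj]; linarith), ?_⟩
  intro r hr
  have hfuj : f (u j) = f (tpt m u ((j:ℕ)+1)) := by rw [htj]
  rcases lt_or_ge r (u j) with hlt | hle
  · have h1 : tpt m u (j:ℕ) ≤ r := by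
      have := min_le_left (u j - tpt m u (j:ℕ)) (tpt m u ((j:ℕ)+2) - u j)
      linarith [hr.1]
    have h2 : r < tpt m u ((j:ℕ)+1) := by rw [htj]; exact hlt
    calc f r = lin N m (fun i => f (tpt m u i)) u r := by rw [← hrep]
    _ = f (tpt m u (j:ℕ)) := lin_eq_on _ hu (by omega) h1 h2
    _ = f (tpt m u ((j:ℕ)+1)) := heq
    _ = f (u j) := by rw [htj]
  · have h1 : tpt m u ((j:ℕ)+1) ≤ r := by rw [htj]; exact hle
    have h2 : r < tpt m u ((j:ℕ)+2) := by
      have := min_le_right (u j - tpt m u (j:ℕ)) (tpt m u ((j:ℕ)+2) - u j)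
      linarith [hr.2]
    calc f r = lin N m (fun i => f (tpt m u i)) u r := by rw [← hrep]
    _ = f (tpt m u ((j:ℕ)+1)) := lin_eq_on _ hu hj1 h1 h2
    _ = f (u j) := by rw [htj]

variable {v : Fin m → ℝ}

lemma linstate_isState (hx : IsState N x) (hu : Valid m u) (hrange : Set.range u = Bp N x)
    (hv : Valid m v) : IsState N (linstate N x m u v) := by
  refine ⟨hx.1.image _, ?_, ?_, ?_⟩
  · rintro F ⟨f, hf, rfl⟩
    exact memS_lin _ hv
  · rintro F ⟨f, hf, rfl⟩
    obtain ⟨s₀, hs₀, hfs⟩ := hx.2.2.1 f hf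
    have hrep := rep_state hx hu hrange hf
    have hcle : cnt m u s₀ ≤ m := cnt_le hs₀.2
    have hpne : f (tpt m u (cnt m u s₀)) ≠ ∅ := by
      intro hcontra
      apply hfs
      rw [hrep, lin_on _ u hs₀]
      exact hcontra
    refine ⟨tpt m v (cnt m u s₀), ⟨tpt_nonneg hv _, ?_⟩, ?_⟩
    · exact lt_of_lt_of_le (tpt_lt hv (Nat.lt_succ_self _) hcle) (tpt_le_one hv _)
    · show lin N m (fun i => f (tpt m u i)) v (tpt m v (cnt m u s₀)) ≠ ∅
      rw [lin_at_tpt _ hv hcle]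
      exact hpne
  · intro s hs
    set i := cnt m v s with hi
    have hcle : i ≤ m := cnt_le hs.2
    have htstar : tpt m u i ∈ Set.Ico (0:ℝ) 1 :=
      ⟨tpt_nonneg hu _, lt_of_lt_of_le (tpt_lt hu (Nat.lt_succ_self _) hcle) (tpt_le_one hu _)⟩
    have hval : ∀ f ∈ x, lin N m (fun i => f (tpt m u i)) v s = f (tpt m u i) := by
      intro f hf
      rw [lin_on _ v hs]
    constructor
    · intro n
      obtain ⟨f, hf, hn⟩ := (hx.2.2.2 (tpt m u i) htstar).1 n
      refine ⟨_, ⟨f, hf, rfl⟩, ?_⟩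
      show n ∈ lin N m (fun i => f (tpt m u i)) v s
      rw [hval f hf]
      exact hn
    · rintro F ⟨f, hf, rfl⟩ G ⟨g, hg, rfl⟩ hne
      have hfg : f ≠ g := by rintro rfl; exact hne rfl
      show Disjoint (lin N m (fun i => f (tpt m u i)) v s) (lin N m (fun i => g (tpt m u i)) v s)
      rw [hval f hf, hval g hg]
      exact (hx.2.2.2 (tpt m u i) htstar).2 f hf g hg hfg

lemma linstate_injOn (hx : IsState N x) (hu : Valid m u) (hrange : Set.range u = Bp N x)
    (hv : Valid m v) :
    Set.InjOn (fun f => lin N m (fun i => f (tpt m u i)) v) x := by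
  intro f hf g hg he
  apply patt_inj hx hu hrange hf hg
  intro i hi
  have h1 := lin_at_tpt (fun i => f (tpt m u i)) hv hi
  have h2 := lin_at_tpt (fun i => g (tpt m u i)) hv hi
  calc f (tpt m u i) = lin N m (fun i => f (tpt m u i)) v (tpt m v i) := h1.symm
  _ = lin N m (fun i => g (tpt m u i)) v (tpt m v i) := congrFun he (tpt m v i)
  _ = g (tpt m u i) := h2

lemma linstate_ncard (hx : IsState N x) (hu : Valid m u) (hrange : Set.range u = Bp N x)
    (hv : Valid m v) : (linstate N x m u v).ncard = x.ncard :=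
  Set.ncard_image_of_injOn (linstate_injOn hx hu hrange hv)

lemma linstate_Bp (hx : IsState N x) (hu : Valid m u) (hrange : Set.range u = Bp N x)
    (hv : Valid m v) : Bp N (linstate N x m u v) = Set.range v := by
  apply Set.Subset.antisymm
  · rintro s ⟨hsI, F, ⟨f, hf, rfl⟩, hnc⟩
    exact Dset_lin _ hv ⟨hsI, hnc⟩
  · rintro s ⟨j, rfl⟩
    obtain ⟨f, hf, hjump⟩ := jump_exists hx hu hrange j
    have hj1 : (j:ℕ) + 1 ≤ m := j.isLt
    have htj : tpt m v ((j:ℕ)+1) = v j := tpt_succ v j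
    refine ⟨⟨hv.1 j, hv.2.1 j⟩, lin N m (fun i => f (tpt m u i)) v, ⟨f, hf, rfl⟩, ?_⟩
    rintro ⟨ε, hε, hc⟩
    set r := max (tpt m v (j:ℕ)) (v j - ε/2) with hr
    have hrlt : r < v j := by
      apply max_lt
      · rw [← htj]; exact tpt_lt hv (Nat.lt_succ_self _) (by omega)
      · linarith
    have hrge : tpt m v (j:ℕ) ≤ r := le_max_left _ _
    have hFr : lin N m (fun i => f (tpt m u i)) v r = f (tpt m u (j:ℕ)) :=
      lin_eq_on _ hv (by omega) hrge (by rw [htj]; exact hrlt)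
    have hFvj : lin N m (fun i => f (tpt m u i)) v (v j) = f (tpt m u ((j:ℕ)+1)) := by
      rw [← htj]
      exact lin_at_tpt _ hv hj1
    have := hc r ⟨by have := le_max_right (tpt m v (j:ℕ)) (v j - ε/2); linarith,
      by linarith⟩
    rw [hFr, hFvj] at this
    exact hjump this

lemma linstate_nBp (hx : IsState N x) (hu : Valid m u) (hrange : Set.range u = Bp N x)
    (hv : Valid m v) : nBp N (linstate N x m u v) = m := by
  rw [nBp, linstate_Bp hx hu hrange hv, ← Set.image_univ,
    Set.ncard_image_of_injective _ ?hinj, Set.ncard_univ, Nat.card_eq_fintype_card,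
    Fintype.card_fin]
  case hinj =>
    intro a b hab
    by_contra hne
    rcases Ne.lt_or_gt hne with h | h
    · exact absurd hab (ne_of_lt (hv.2.2 a b (Fin.lt_def.1 h)))
    · exact absurd hab.symm (ne_of_lt (hv.2.2 b a (Fin.lt_def.1 h)))

lemma linstate_self (hx : IsState N x) (hu : Valid m u) (hrange : Set.range u = Bp N x) :
    linstate N x m u u = x := by
  unfold linstate
  rw [Set.image_congr (fun f hf => (rep_state hx hu hrange hf).symm), Set.image_id']

lemma dL_lin_le (hv : Valid m v) {p : ℕ → Finset (Fin N)} {v' : Fin m → ℝ} (hv' : Valid m v') :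
    dL N (lin N m p v) (lin N m p v') ≤ ∑ i, |v i - v' i| := by
  rw [dL_eq_volume (memS_lin p hv) (memS_lin p hv')]
  have hsub : {s : ℝ | lin N m p v s ≠ lin N m p v' s} ∩ Set.Ioo (0:ℝ) 1 ⊆
      ⋃ i, Set.Ico (min (v i) (v' i)) (max (v i) (v' i)) := by
    rintro s ⟨hne, hsI⟩
    by_contra hns
    simp only [Set.mem_iUnion, not_exists] at hns
    have hiff : ∀ i : Fin m, (s < v i ↔ s < v' i) := by
      intro i
      have hni : s ∉ Set.Ico (min (v i) (v' i)) (max (v i) (v' i)) := hns i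
      rcases lt_or_ge s (min (v i) (v' i)) with h | h
      · exact ⟨fun _ => lt_of_lt_of_le h (min_le_right _ _),
          fun _ => lt_of_lt_of_le h (min_le_left _ _)⟩
      · have hge : max (v i) (v' i) ≤ s := by
          by_contra hc
          exact hni ⟨h, not_le.1 hc⟩
        exact ⟨fun hlt => ((not_lt.2 (le_trans (le_max_left _ _) hge)) hlt).elim,
          fun hlt => ((not_lt.2 (le_trans (le_max_right _ _) hge)) hlt).elim⟩
    have hcnt : cnt m v s = cnt m v' s := by
      unfold cnt
      congr 1
      ext i
      simp only [Set.mem_setOf_eq, tpt]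
      rw [dif_neg (Nat.succ_ne_zero i), dif_neg (Nat.succ_ne_zero i)]
      by_cases h : i + 1 ≤ m
      · rw [dif_pos h, dif_pos h]
        exact hiff ⟨i + 1 - 1, by omega⟩
      · rw [dif_neg h, dif_neg h]
    apply hne
    have hs01 : s ∈ Set.Ico (0:ℝ) 1 := ⟨le_of_lt hsI.1, hsI.2⟩
    rw [lin_on p v hs01, lin_on p v' hs01, hcnt]
  have h1 : volume ({s : ℝ | lin N m p v s ≠ lin N m p v' s} ∩ Set.Ioo (0:ℝ) 1) ≤
      ∑ i, ENNReal.ofReal (|v i - v' i|) := by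
    refine le_trans (measure_mono hsub) (le_trans (measure_iUnion_fintype_le _ _) ?_)
    apply Finset.sum_le_sum
    intro i _
    rw [Real.volume_Ico, max_sub_min_eq_abs, abs_sub_comm]
  calc (volume ({s : ℝ | lin N m p v s ≠ lin N m p v' s} ∩ Set.Ioo (0:ℝ) 1)).toReal
      ≤ (∑ i, ENNReal.ofReal (|v i - v' i|)).toReal :=
        ENNReal.toReal_mono (by
          refine (ENNReal.sum_lt_top.2 ?_).ne
          intro i _
          exact ENNReal.ofReal_lt_top) h1
    _ = ∑ i, |v i - v' i| := by
        rw [ENNReal.toReal_sum (fun i _ => ENNReal.ofReal_ne_top)]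
        congr 1
        funext i
        exact ENNReal.toReal_ofReal (abs_nonneg _)

lemma dE_linstate_le (hx : IsState N x) (hu : Valid m u) (hrange : Set.range u = Bp N x)
    (hv : Valid m v) {v' : Fin m → ℝ} (hv' : Valid m v') :
    dE N (linstate N x m u v) (linstate N x m u v') ≤ ∑ i, |v i - v' i| := by
  have hsum0 : (0:ℝ) ≤ ∑ i, |v i - v' i| := Finset.sum_nonneg (fun i _ => abs_nonneg _)
  have hsup : ∀ {a b : Fin m → ℝ}, Valid m a → Valid m b → (∀ i, |a i - b i| ≤ |v i - v' i|) →
      sSup ((fun F => dLset N F (linstate N x m u b)) '' (linstate N x m u a)) ≤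
        ∑ i, |v i - v' i| := by
    intro a b ha hb hab
    apply Real.sSup_le _ hsum0
    rintro r ⟨F, ⟨f, hf, rfl⟩, rfl⟩
    have hmem : lin N m (fun i => f (tpt m u i)) b ∈ linstate N x m u b := ⟨f, hf, rfl⟩
    refine le_trans (dLset_le ((linstate_isState hx hu hrange hb).1) hmem) ?_
    refine le_trans (dL_lin_le ha hb) ?_
    exact Finset.sum_le_sum (fun i _ => hab i)
  unfold dE
  rw [linstate_ncard hx hu hrange hv, linstate_ncard hx hu hrange hv',
    linstate_nBp hx hu hrange hv, linstate_nBp hx hu hrange hv',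
    sub_self, sub_self, abs_zero, add_zero, add_zero]
  apply max_le
  · exact hsup hv hv' (fun i => le_refl _)
  · exact hsup hv' hv (fun i => le_of_eq (abs_sub_comm _ _))


lemma ncard_range_valid {m : ℕ} {v : Fin m → ℝ} (hv : Valid m v) :
    (Set.range v).ncard = m := by
  rw [← Set.image_univ, Set.ncard_image_of_injective _ ?hinj, Set.ncard_univ,
    Nat.card_eq_fintype_card, Fintype.card_fin]
  case hinj =>
    intro a b hab
    by_contra hne
    rcases Ne.lt_or_gt hne with h | h
    · exact absurd hab (ne_of_lt (hv.2.2 a b (Fin.lt_def.1 h)))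
    · exact absurd hab.symm (ne_of_lt (hv.2.2 b a (Fin.lt_def.1 h)))

lemma nat_eq_of_abs_lt {a b : ℕ} (h : |(a:ℝ) - (b:ℝ)| < 1) : a = b := by
  have h' := abs_lt.1 h
  have h1 : a < b + 1 := by exact_mod_cast (by push_cast; linarith [h'.1, h'.2] : (a:ℝ) < (b:ℝ) + 1)
  have h2 : b < a + 1 := by exact_mod_cast (by push_cast; linarith [h'.1, h'.2] : (b:ℝ) < (a:ℝ) + 1)
  omega

lemma parts_le_dE (x y : Set (Lin N)) :
    sSup ((fun f => dLset N f y) '' x) ≤ dE N x y ∧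
    sSup ((fun h => dLset N h x) '' y) ≤ dE N x y ∧
    |(x.ncard : ℝ) - (y.ncard : ℝ)| ≤ dE N x y ∧
    |(nBp N x : ℝ) - (nBp N y : ℝ)| ≤ dE N x y := by
  unfold dE
  have n1 := sup_dLset_nonneg x y
  have n2 := sup_dLset_nonneg y x
  have n3 : (0:ℝ) ≤ |(x.ncard : ℝ) - (y.ncard : ℝ)| := abs_nonneg _
  have n4 : (0:ℝ) ≤ |(nBp N x : ℝ) - (nBp N y : ℝ)| := abs_nonneg _
  have m1 := le_max_left (sSup ((fun f => dLset N f y) '' x)) (sSup ((fun h => dLset N h x) '' y))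
  have m2 := le_max_right (sSup ((fun f => dLset N f y) '' x)) (sSup ((fun h => dLset N h x) '' y))
  refine ⟨by linarith, by linarith, by linarith, by linarith⟩

lemma state_const_on {y : Set (Lin N)} {g : Lin N} (hy : IsState N y) (hg : g ∈ y)
    {a b : ℝ} (h0 : 0 ≤ a) (hb1 : b ≤ 1) (hBp : ∀ s ∈ Set.Ioo a b, s ∉ Bp N y) :
    ∀ s ∈ Set.Ico a b, g s = g a :=
  constOn g h0 hb1 (hy.2.1 g hg).1 (fun s hs => by
    by_contra hc
    exact hBp s hs ⟨⟨lt_of_le_of_lt h0 hs.1, lt_of_lt_of_le hs.2 hb1⟩, g, hg, hc⟩)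

/-- Rigidity: a state close to `x` is a reparametrization of `x` with nearby breakpoints. -/
lemma rigidity {x : Set (Lin N)} {m : ℕ} {u : Fin m → ℝ} (hx : IsState N x)
    (hu : Valid m u) (hrange : Set.range u = Bp N x) (hm : nBp N x = m)
    {δ : ℝ} (hδ : 0 < δ) (hδ1 : δ ≤ 1)
    (hgap : ∀ i : ℕ, i ≤ m → δ ≤ tpt m u (i+1) - tpt m u i)
    {y : Set (Lin N)} (hy : IsState N y) (hlt : dE N x y < δ/8) :
    ∃ v : Fin m → ℝ, Valid m v ∧ (∀ j, |v j - u j| ≤ δ/4) ∧ y = linstate N x m u v := by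
  set r : ℝ := δ/8 with hrdef
  have hr0 : 0 < r := by positivity
  obtain ⟨hs1, hs2, hc1, hc2⟩ := parts_le_dE (N := N) x y
  have hncard : y.ncard = x.ncard :=
    (nat_eq_of_abs_lt (lt_of_le_of_lt hc1 (lt_of_lt_of_le hlt (by linarith)))).symm
  have hnBp : nBp N y = m := by
    rw [← hm]
    exact (nat_eq_of_abs_lt (lt_of_le_of_lt hc2 (lt_of_lt_of_le hlt (by linarith)))).symm
  rcases Set.eq_empty_or_nonempty x with rfl | hxne
  · have hyempty : y = ∅ := by
      by_contra hne
      obtain ⟨g, hg⟩ := state_nonempty_of hy hx (Set.nonempty_iff_ne_empty.2 hne)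
      exact absurd hg (Set.notMem_empty g)
    refine ⟨u, hu, fun j => ?_, ?_⟩
    · exfalso
      have : u j ∈ Bp N (∅ : Set (Lin N)) := hrange ▸ ⟨j, rfl⟩
      obtain ⟨_, f, hf, _⟩ := this
      exact hf
    · rw [hyempty]
      unfold linstate
      rw [Set.image_empty]
  have hyne : y.Nonempty := state_nonempty_of hx hy hxne
  have match1 : ∀ f ∈ x, ∃ g ∈ y, dL N f g < r := by
    intro f hf
    obtain ⟨g, hg, he⟩ := dLset_attain (f := f) hy.1 hyne
    refine ⟨g, hg, ?_⟩
    rw [← he]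
    calc dLset N f y ≤ sSup ((fun f => dLset N f y) '' x) :=
          le_csSup (hx.1.image _).bddAbove ⟨f, hf, rfl⟩
    _ ≤ dE N x y := hs1
    _ < r := hlt
  have match2 : ∀ g ∈ y, ∃ f ∈ x, dL N g f < r := by
    intro g hg
    obtain ⟨f, hf, he⟩ := dLset_attain (f := g) hx.1 hxne
    refine ⟨f, hf, ?_⟩
    rw [← he]
    calc dLset N g x ≤ sSup ((fun h => dLset N h x) '' y) :=
          le_csSup (hy.1.image _).bddAbove ⟨g, hg, rfl⟩
    _ ≤ dE N x y := hs2
    _ < r := hlt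
  -- Step R1: near every breakpoint of x there is a breakpoint of y.
  have hR1 : ∀ j : Fin m, ∃ w ∈ Bp N y, |w - u j| < 2*r := by
    intro j
    by_contra hnone
    push_neg at hnone
    obtain ⟨f, hf, hjump⟩ := jump_exists hx hu hrange j
    obtain ⟨g, hg, hdL⟩ := match1 f hf
    have htj : tpt m u ((j:ℕ)+1) = u j := tpt_succ u j
    have hgapj : δ ≤ u j - tpt m u (j:ℕ) := by
      have := hgap (j:ℕ) (by omega)
      rwa [htj] at this
    have hgapj1 : δ ≤ tpt m u ((j:ℕ)+2) - u j := by
      have := hgap ((j:ℕ)+1) (by exact j.isLt)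
      rwa [htj] at this
    have htpt2 : tpt m u ((j:ℕ)+2) ≤ 1 := tpt_le_one hu _
    have htptnn : (0:ℝ) ≤ tpt m u (j:ℕ) := tpt_nonneg hu _
    have hub : u j + 2*r ≤ 1 := by
      have : 2*r < δ := by rw [hrdef]; linarith
      linarith
    have hlb : 0 ≤ u j - 2*r := by
      have : 2*r < δ := by rw [hrdef]; linarith
      linarith
    have hgc := state_const_on hy hg (a := u j - 2*r) (b := u j + 2*r) hlb hub
      (fun s hs hBp => by
        have h2r := hnone s hBp
        have : |s - u j| < 2*r := abs_lt.2 ⟨by linarith [hs.1], by linarith [hs.2]⟩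
        linarith)
    have hrepf := rep_state hx hu hrange hf
    have hfL : ∀ s ∈ Set.Ico (u j - 2*r) (u j), f s = f (tpt m u (j:ℕ)) := by
      intro s hs
      have h1 : tpt m u (j:ℕ) ≤ s := by linarith [hs.1, hgapj]
      have h2 : s < tpt m u ((j:ℕ)+1) := by rw [htj]; exact hs.2
      have := lin_eq_on (fun i => f (tpt m u i)) hu (show (j:ℕ) ≤ m by omega) h1 h2
      rw [← hrepf] at this
      exact this
    have hfR : ∀ s ∈ Set.Ico (u j) (u j + 2*r), f s = f (tpt m u ((j:ℕ)+1)) := by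
      intro s hs
      have h1 : tpt m u ((j:ℕ)+1) ≤ s := by rw [htj]; exact hs.1
      have h2 : s < tpt m u ((j:ℕ)+2) := by
        have : 2*r < δ := by rw [hrdef]; linarith
        linarith [hs.2]
      have := lin_eq_on (fun i => f (tpt m u i)) hu (show (j:ℕ)+1 ≤ m from j.isLt) h1 h2
      rw [← hrepf] at this
      exact this
    have huj1 : u j < 1 := hu.2.1 j
    have huj0 : 0 < u j := hu.1 j
    rcases ne_or_eq (g (u j - 2*r)) (f (tpt m u (j:ℕ))) with hne | heq
    · have hsub : Set.Ioo (u j - 2*r) (u j) ⊆ {s : ℝ | f s ≠ g s} ∩ Set.Ioo (0:ℝ) 1 := by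
        intro s hs
        refine ⟨?_, lt_of_le_of_lt hlb hs.1, lt_trans hs.2 huj1⟩
        show f s ≠ g s
        rw [hfL s ⟨le_of_lt hs.1, hs.2⟩, hgc s ⟨le_of_lt hs.1, by linarith [hs.2]⟩]
        exact fun hcc => hne hcc.symm
      have := le_dL_of_Ioo (hx.2.1 f hf) (hy.2.1 g hg) hsub
      have h2r : u j - (u j - 2*r) = 2*r := by ring
      rw [h2r] at this
      linarith
    · have hsub : Set.Ioo (u j) (u j + 2*r) ⊆ {s : ℝ | f s ≠ g s} ∩ Set.Ioo (0:ℝ) 1 := by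
        intro s hs
        refine ⟨?_, lt_trans huj0 hs.1, lt_of_lt_of_le hs.2 hub⟩
        show f s ≠ g s
        rw [hfR s ⟨le_of_lt hs.1, hs.2⟩, hgc s ⟨by linarith [hs.1], hs.2⟩, heq]
        exact fun hcc => hjump hcc.symm
      have := le_dL_of_Ioo (hx.2.1 f hf) (hy.2.1 g hg) hsub
      have h2r : u j + 2*r - u j = 2*r := by ring
      rw [h2r] at this
      linarith
  choose w hwBp hwnear using hR1
  have hgapuu : ∀ j j' : Fin m, (j:ℕ) < (j':ℕ) → δ ≤ u j' - u j := by
    intro j j' hjj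
    have e1 : tpt m u ((j:ℕ)+1) = u j := tpt_succ u j
    have e2 : tpt m u ((j':ℕ)+1) = u j' := tpt_succ u j'
    have h1 : tpt m u ((j:ℕ)+2) ≤ tpt m u ((j':ℕ)+1) := tpt_mono hu (by omega)
    have h2 : δ ≤ tpt m u ((j:ℕ)+2) - tpt m u ((j:ℕ)+1) := hgap _ j.isLt
    rw [e1] at h2
    rw [e2] at h1
    linarith
  have hw : Valid m w := by
    refine ⟨fun j => (Bp_subset_Ioo (hwBp j)).1, fun j => (Bp_subset_Ioo (hwBp j)).2, ?_⟩
    intro j j' hjj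
    have hd := hgapuu j j' hjj
    have h1 := abs_lt.1 (hwnear j)
    have h2 := abs_lt.1 (hwnear j')
    have : 4*r < δ := by rw [hrdef]; linarith
    linarith [h1.1, h1.2, h2.1, h2.2]
  have hrangew : Set.range w = Bp N y := by
    refine Set.eq_of_subset_of_ncard_le ?_ ?_ (Bp_finite hy)
    · rintro s ⟨j, rfl⟩
      exact hwBp j
    · rw [ncard_range_valid hw]
      exact le_of_eq hnBp
  have hclose : ∀ k : ℕ, |tpt m w k - tpt m u k| ≤ 2*r := by
    intro k
    rcases Nat.eq_zero_or_pos k with rfl | hk0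
    · rw [tpt_zero, tpt_zero, sub_self, abs_zero]; positivity
    rcases le_or_gt k m with hkm | hkm
    · have hkk : k - 1 < m := by omega
      have hcoe : ((⟨k-1, hkk⟩ : Fin m) : ℕ) + 1 = k := by simp; omega
      have e1 : tpt m w k = w ⟨k-1, hkk⟩ := by
        have := tpt_succ w ⟨k-1, hkk⟩
        rwa [hcoe] at this
      have e2 : tpt m u k = u ⟨k-1, hkk⟩ := by
        have := tpt_succ u ⟨k-1, hkk⟩
        rwa [hcoe] at this
      rw [e1, e2]
      exact le_of_lt (hwnear _)
    · rw [tpt_of_gt _ hkm, tpt_of_gt _ hkm, sub_self, abs_zero]; positivity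
  have hsuby : y ⊆ linstate N x m u w := by
    intro g hg
    obtain ⟨f, hf, hdLgf⟩ := match2 g hg
    have hrepg := rep_state hy hw hrangew hg
    have hrepf := rep_state hx hu hrange hf
    have hpatt : ∀ i ≤ m, g (tpt m w i) = f (tpt m u i) := by
      intro i hi
      by_contra hne
      have hci := abs_le.1 (hclose i)
      have hci1 := abs_le.1 (hclose (i+1))
      have hgapi := hgap i hi
      set a := max (tpt m u i) (tpt m w i) with ha
      set b := min (tpt m u (i+1)) (tpt m w (i+1)) with hb
      have hab : r < b - a := by
        have h1 : a ≤ tpt m u i + 2*r := max_le (by linarith [hci.1, hci.2]) (by linarith [hci.1, hci.2])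
        have h2 : tpt m u (i+1) - 2*r ≤ b := le_min (by linarith) (by linarith [hci1.1, hci1.2])
        have : 5*r < δ := by rw [hrdef]; linarith
        linarith
      have hsub : Set.Ioo a b ⊆ {s : ℝ | g s ≠ f s} ∩ Set.Ioo (0:ℝ) 1 := by
        intro s hs
        have hsa1 : tpt m u i ≤ s := le_of_lt (lt_of_le_of_lt (le_max_left _ _) hs.1)
        have hsa2 : tpt m w i ≤ s := le_of_lt (lt_of_le_of_lt (le_max_right _ _) hs.1)
        have hsb1 : s < tpt m u (i+1) := lt_of_lt_of_le hs.2 (min_le_left _ _)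
        have hsb2 : s < tpt m w (i+1) := lt_of_lt_of_le hs.2 (min_le_right _ _)
        refine ⟨?_, ?_, ?_⟩
        · show g s ≠ f s
          have e1 := lin_eq_on (fun i => g (tpt m w i)) hw hi hsa2 hsb2
          rw [← hrepg] at e1
          have e2 := lin_eq_on (fun i => f (tpt m u i)) hu hi hsa1 hsb1
          rw [← hrepf] at e2
          rw [e1, e2]
          exact hne
        · exact lt_of_le_of_lt (le_trans (tpt_nonneg hu i) (le_max_left _ _)) hs.1
        · exact lt_of_lt_of_le hsb1 (tpt_le_one hu _)
      have := le_dL_of_Ioo (hy.2.1 g hg) (hx.2.1 f hf) hsub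
      linarith
    refine ⟨f, hf, ?_⟩
    show lin N m (fun i => f (tpt m u i)) w = g
    calc lin N m (fun i => f (tpt m u i)) w
        = lin N m (fun i => g (tpt m w i)) w := lin_congr w (fun i hi => (hpatt i hi).symm)
    _ = g := hrepg.symm
  refine ⟨w, hw, fun j => by have := hwnear j; rw [hrdef] at this; linarith [le_of_lt this], ?_⟩
  exact Set.eq_of_subset_of_ncard_le hsuby
    (by rw [linstate_ncard hx hu hrange hw, hncard]) (hx.1.image _)

end StatePar


/-! ### Gap and perturbation lemmas -/

lemma exists_gap {m : ℕ} {u : Fin m → ℝ} (hu : Valid m u) :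
    ∃ δ : ℝ, 0 < δ ∧ δ ≤ 1 ∧ ∀ i ≤ m, δ ≤ tpt m u (i+1) - tpt m u i := by
  have hne : (Finset.univ : Finset (Fin (m+1))).Nonempty := Finset.univ_nonempty
  set δ := Finset.univ.inf' hne (fun i : Fin (m+1) => tpt m u ((i:ℕ)+1) - tpt m u (i:ℕ)) with hδ
  have hgap : ∀ i ≤ m, δ ≤ tpt m u (i+1) - tpt m u i := by
    intro i hi
    exact Finset.inf'_le (f := fun i : Fin (m+1) => tpt m u ((i:ℕ)+1) - tpt m u (i:ℕ))
      (Finset.mem_univ (⟨i, by omega⟩ : Fin (m+1)))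
  have hpos : 0 < δ := by
    rw [hδ, Finset.lt_inf'_iff]
    intro i _
    have hi : (i:ℕ) ≤ m := by omega
    linarith [tpt_lt hu (Nat.lt_succ_self (i:ℕ)) hi]
  have h1 : δ ≤ 1 := by
    have h2 := hgap 0 (Nat.zero_le m)
    have h3 := tpt_le_one hu 1
    rw [tpt_zero] at h2
    linarith
  exact ⟨δ, hpos, h1, hgap⟩

lemma valid_of_near {m : ℕ} {u : Fin m → ℝ} (hu : Valid m u) {δ : ℝ} (hδ : 0 < δ)
    (hgap : ∀ i ≤ m, δ ≤ tpt m u (i+1) - tpt m u i) {v : Fin m → ℝ}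
    (hnear : ∀ j, |v j - u j| ≤ δ/4) : Valid m v := by
  have hub : ∀ j : Fin m, δ ≤ u j ∧ u j ≤ 1 - δ := by
    intro j
    have e1 : tpt m u ((j:ℕ)+1) = u j := tpt_succ u j
    have g0 : δ ≤ tpt m u 1 - tpt m u 0 := hgap 0 (Nat.zero_le m)
    have gj : δ ≤ tpt m u ((j:ℕ)+2) - tpt m u ((j:ℕ)+1) := hgap _ j.isLt
    have m1 : tpt m u 1 ≤ tpt m u ((j:ℕ)+1) := tpt_mono hu (by omega)
    have m2 : tpt m u ((j:ℕ)+2) ≤ 1 := tpt_le_one hu _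
    rw [tpt_zero] at g0
    constructor
    · rw [← e1]; linarith
    · rw [← e1]; linarith
  refine ⟨?_, ?_, ?_⟩
  · intro j
    have h := abs_le.1 (hnear j)
    have h2 := (hub j).1
    linarith [h.1]
  · intro j
    have h := abs_le.1 (hnear j)
    have h2 := (hub j).2
    linarith [h.2]
  · intro j j' hjj
    have e1 : tpt m u ((j:ℕ)+1) = u j := tpt_succ u j
    have e2 : tpt m u ((j':ℕ)+1) = u j' := tpt_succ u j'
    have h1 : tpt m u ((j:ℕ)+2) ≤ tpt m u ((j':ℕ)+1) := tpt_mono hu (by omega)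
    have h2 : δ ≤ tpt m u ((j:ℕ)+2) - tpt m u ((j:ℕ)+1) := hgap _ j.isLt
    rw [e1] at h2
    rw [e2] at h1
    have a1 := abs_le.1 (hnear j)
    have a2 := abs_le.1 (hnear j')
    linarith [a1.1, a1.2, a2.1, a2.2]

/-! ### Local compactness -/

lemma exists_compact_nbhd (N : ℕ) (x : {x : Set (Lin N) // IsState N x}) :
    ∃ K : Set {x : Set (Lin N) // IsState N x},
      @IsCompact _ (Einst N).toPseudoMetricSpace.toUniformSpace.toTopologicalSpace K ∧
      K ∈ @nhds _ (Einst N).toPseudoMetricSpace.toUniformSpace.toTopologicalSpace x := by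
  classical
  letI := Einst N
  letI : TopologicalSpace {x : Set (Lin N) // IsState N x} :=
    (Einst N).toPseudoMetricSpace.toUniformSpace.toTopologicalSpace
  obtain ⟨m, u, hmeq, hu, hrange⟩ := exists_enum' x.2
  obtain ⟨δ, hδpos, hδ1, hgap⟩ := exists_gap hu
  set D : Set (Fin m → ℝ) := Set.univ.pi (fun j => Set.Icc (u j - δ/4) (u j + δ/4)) with hD
  have hDcomp : IsCompact D := isCompact_univ_pi (fun j => isCompact_Icc)
  have hDvalid : ∀ v ∈ D, Valid m v := by
    intro v hv
    refine valid_of_near hu hδpos hgap (fun j => ?_)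
    have := (Set.mem_univ_pi.1 hv) j
    exact abs_le.2 ⟨by linarith [this.1], by linarith [this.2]⟩
  set W : (Fin m → ℝ) → {x : Set (Lin N) // IsState N x} := fun v =>
    if h : Valid m v then ⟨linstate N x.1 m u v, linstate_isState x.2 hu hrange h⟩ else x
    with hW
  have hWval : ∀ v, (h : Valid m v) →
      W v = ⟨linstate N x.1 m u v, linstate_isState x.2 hu hrange h⟩ := by
    intro v h
    rw [hW]
    exact dif_pos h
  have hWcont : ContinuousOn W D := by
    rw [Metric.continuousOn_iff]
    intro v hv ε hε
    refine ⟨ε/(m+1), by positivity, ?_⟩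
    intro v' hv' hdist
    rw [hWval v' (hDvalid v' hv'), hWval v (hDvalid v hv)]
    show dE N (linstate N x.1 m u v') (linstate N x.1 m u v) < ε
    refine lt_of_le_of_lt (dE_linstate_le x.2 hu hrange (hDvalid v' hv') (hDvalid v hv)) ?_
    have hd0 : 0 ≤ dist v' v := dist_nonneg
    calc ∑ i, |v' i - v i| ≤ ∑ _i : Fin m, dist v' v :=
          Finset.sum_le_sum (fun i _ => by rw [← Real.dist_eq]; exact dist_le_pi_dist v' v i)
    _ = m * dist v' v := by
        rw [Finset.sum_const, Finset.card_univ, Fintype.card_fin, nsmul_eq_mul]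
    _ ≤ m * (ε/(m+1)) := mul_le_mul_of_nonneg_left (le_of_lt hdist) (Nat.cast_nonneg m)
    _ < ε := by
        have hm1 : (0:ℝ) < (m:ℝ) + 1 := by positivity
        rw [mul_comm, div_mul_eq_mul_div, div_lt_iff₀ hm1]
        nlinarith [Nat.cast_nonneg (α := ℝ) m]
  refine ⟨W '' D, hDcomp.image_of_continuousOn hWcont, ?_⟩
  refine Filter.mem_of_superset (Metric.ball_mem_nhds x (show (0:ℝ) < δ/8 by positivity)) ?_
  intro y hy
  have hdE : dE N x.1 y.1 < δ/8 := by
    have h1 := Metric.mem_ball.1 hy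
    have h2 : dist y x = dE N y.1 x.1 := rfl
    rw [h2, dE_comm] at h1
    exact h1
  obtain ⟨v, hvval, hvnear, hveq⟩ := rigidity x.2 hu hrange hmeq.symm hδpos hδ1 hgap y.2 hdE
  refine ⟨v, ?_, ?_⟩
  · rw [Set.mem_univ_pi]
    intro j
    have := abs_le.1 (hvnear j)
    exact ⟨by linarith [this.1], by linarith [this.2]⟩
  · rw [hWval v hvval]
    exact (Subtype.ext hveq).symm

/-! ### Separability -/

/-- Reconstruction of a state from discrete data. -/
noncomputable def recon (N : ℕ)
    (d : Σ k : ℕ, (Fin k → ℚ) × Set (Fin (k+1) → Finset (Fin N))) : Set (Lin N) :=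
  (fun p : Fin (d.1+1) → Finset (Fin N) =>
    lin N d.1 (fun i => if h : i < d.1+1 then p ⟨i, h⟩ else ∅)
      (fun j => ((d.2.1 j : ℝ)))) '' d.2.2

lemma recon_eq {N : ℕ} {x : Set (Lin N)} (hx : IsState N x) {m : ℕ} {u : Fin m → ℝ}
    (hu : Valid m u) (hrange : Set.range u = Bp N x) (q : Fin m → ℚ)
    (hq : ∀ j, ((q j : ℝ)) = u j) :
    recon N ⟨m, q, (fun g => fun i : Fin (m+1) => g (tpt m u (i:ℕ))) '' x⟩ = x := by
  show (fun p : Fin (m+1) → Finset (Fin N) =>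
      lin N m (fun i => if h : i < m+1 then p ⟨i, h⟩ else ∅) (fun j => ((q j : ℝ)))) ''
      ((fun g => fun i : Fin (m+1) => g (tpt m u (i:ℕ))) '' x) = x
  have hqu : (fun j : Fin m => ((q j : ℝ))) = u := funext hq
  rw [hqu, ← Set.image_comp]
  have hcong : ∀ g ∈ x, ((fun p : Fin (m+1) → Finset (Fin N) =>
      lin N m (fun i => if h : i < m+1 then p ⟨i, h⟩ else ∅) u) ∘
      (fun g => fun i : Fin (m+1) => g (tpt m u (i:ℕ)))) g = g := by
    intro g hg
    have e1 : lin N m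
        (fun i => if h : i < m+1 then g (tpt m u ((⟨i, h⟩ : Fin (m+1)):ℕ)) else ∅) u
        = lin N m (fun i => g (tpt m u i)) u :=
      lin_congr u (fun i hi => by rw [dif_pos (by omega)])
    show lin N m
      (fun i => if h : i < m+1 then g (tpt m u ((⟨i, h⟩ : Fin (m+1)):ℕ)) else ∅) u = g
    rw [e1]
    exact (rep_state hx hu hrange hg).symm
  rw [Set.image_congr hcong, Set.image_id']

lemma countable_dense_subset (N : ℕ) :
    ∃ 𝒟 : Set {x : Set (Lin N) // IsState N x}, 𝒟.Countable ∧
      @Dense _ (Einst N).toPseudoMetricSpace.toUniformSpace.toTopologicalSpace 𝒟 := by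
  classical
  letI := Einst N
  letI : TopologicalSpace {x : Set (Lin N) // IsState N x} :=
    (Einst N).toPseudoMetricSpace.toUniformSpace.toTopologicalSpace
  set 𝒟 : Set {x : Set (Lin N) // IsState N x} :=
    {y | ∀ b ∈ Bp N y.1, ∃ q : ℚ, (q:ℝ) = b} with h𝒟
  refine ⟨𝒟, ?_, ?_⟩
  · -- countability
    have hsub : 𝒟 ⊆ Subtype.val ⁻¹' (Set.range (recon N)) := by
      intro y hy
      have hy' : ∀ b ∈ Bp N y.1, ∃ q : ℚ, (q:ℝ) = b := hy
      obtain ⟨m, u, hmeq, hu, hrange⟩ := exists_enum' y.2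
      choose q hq using fun j => hy' (u j) (hrange ▸ ⟨j, rfl⟩)
      exact Set.mem_preimage.2
        ⟨⟨m, q, (fun g => fun i : Fin (m+1) => g (tpt m u (i:ℕ))) '' y.1⟩,
          recon_eq y.2 hu hrange q hq⟩
    exact Set.Countable.mono hsub ((Set.countable_range _).preimage Subtype.val_injective)
  · -- density
    rw [Metric.dense_iff]
    intro x ε hε
    obtain ⟨m, u, hmeq, hu, hrange⟩ := exists_enum' x.2
    obtain ⟨δ, hδpos, hδ1, hgap⟩ := exists_gap hu
    set η := min (δ/4) (ε/(2*(m+1))) with hη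
    have hηpos : 0 < η := lt_min (by positivity) (by positivity)
    have hqex : ∀ j : Fin m, ∃ q : ℚ, u j - η < (q:ℝ) ∧ (q:ℝ) < u j :=
      fun j => exists_rat_btwn (by linarith)
    choose q hq1 hq2 using hqex
    set v : Fin m → ℝ := fun j => ((q j : ℝ)) with hv
    have hvnear : ∀ j, |v j - u j| ≤ η :=
      fun j => abs_le.2 ⟨by linarith [hq1 j], by linarith [hq2 j]⟩
    have hvval : Valid m v := valid_of_near hu hδpos hgap
      (fun j => le_trans (hvnear j) (min_le_left _ _))
    set y : {x : Set (Lin N) // IsState N x} :=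
      ⟨linstate N x.1 m u v, linstate_isState x.2 hu hrange hvval⟩ with hy
    refine ⟨y, ⟨?_, ?_⟩⟩
    · rw [Metric.mem_ball]
      show dE N y.1 x.1 < ε
      have hx1 : x.1 = linstate N x.1 m u u := (linstate_self x.2 hu hrange).symm
      have hb : dE N y.1 x.1 ≤ ∑ i, |v i - u i| := by
        show dE N (linstate N x.1 m u v) x.1 ≤ ∑ i, |v i - u i|
        calc dE N (linstate N x.1 m u v) x.1
            = dE N (linstate N x.1 m u v) (linstate N x.1 m u u) := by rw [← hx1]
        _ ≤ ∑ i, |v i - u i| := dE_linstate_le x.2 hu hrange hvval hu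
      refine lt_of_le_of_lt hb ?_
      calc ∑ i, |v i - u i| ≤ ∑ _i : Fin m, η := Finset.sum_le_sum (fun i _ => hvnear i)
      _ = m * η := by rw [Finset.sum_const, Finset.card_univ, Fintype.card_fin, nsmul_eq_mul]
      _ ≤ m * (ε/(2*(m+1))) :=
          mul_le_mul_of_nonneg_left (min_le_right _ _) (Nat.cast_nonneg m)
      _ < ε := by
          have hm1 : (0:ℝ) < 2*((m:ℝ) + 1) := by positivity
          rw [mul_comm, div_mul_eq_mul_div, div_lt_iff₀ hm1]
          nlinarith [Nat.cast_nonneg (α := ℝ) m]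
    · show ∀ b ∈ Bp N y.1, ∃ q' : ℚ, (q':ℝ) = b
      intro b hb
      have hBy : Bp N y.1 = Set.range v := linstate_Bp x.2 hu hrange hvval
      rw [hBy] at hb
      obtain ⟨j, rfl⟩ := hb
      exact ⟨q j, rfl⟩

end Aux

/-- `(E,d)` is a locally compact separable metric space. -/
theorem E_locally_compact_separable (N : ℕ) :
    ∃ inst : MetricSpace {x : Set (Lin N) // IsState N x},
      (∀ a b : {x : Set (Lin N) // IsState N x},
        @dist _ inst.toPseudoMetricSpace.toDist a b = dE N a.1 b.1) ∧
      @LocallyCompactSpace {x : Set (Lin N) // IsState N x}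
        inst.toPseudoMetricSpace.toUniformSpace.toTopologicalSpace ∧
      @TopologicalSpace.SeparableSpace {x : Set (Lin N) // IsState N x}
        inst.toPseudoMetricSpace.toUniformSpace.toTopologicalSpace := by
  classical
  refine ⟨Einst N, fun a b => rfl, ?_, ?_⟩
  · letI := Einst N
    letI : TopologicalSpace {x : Set (Lin N) // IsState N x} :=
      (Einst N).toPseudoMetricSpace.toUniformSpace.toTopologicalSpace
    haveI : WeaklyLocallyCompactSpace {x : Set (Lin N) // IsState N x} :=
      ⟨fun x => exists_compact_nbhd N x⟩
    infer_instance
  · letI := Einst N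
    letI : TopologicalSpace {x : Set (Lin N) // IsState N x} :=
      (Einst N).toPseudoMetricSpace.toUniformSpace.toTopologicalSpace
    obtain ⟨𝒟, hcnt, hdense⟩ := countable_dense_subset N
    exact ⟨⟨𝒟, hcnt, hdense⟩⟩
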